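/- arXiv:2104.11209 — 3 statements merged into one kernel-verified Lean document; each statement's English description precedes it below -/
import Mathlib

section
/- Every feasible point of problem 𝒫 is a regular point: for each of the possible patterns of active inequality constraints (none, one azimuth constraint, one elevation constraint, or one azimuth plus one elevation constraint), the gradients of the active constraints (including the sphere equality constraint) at any feasible point are linearly independent. -/
/-!
All constraints of 𝒫 other than the sphere are linear and homogeneous, so the gradient of an
active one is orthogonal to `p`, whereas the sphere gradient `2p` is nonzero. Hence `2p` lies
outside the span of the active cone gradients, and these are independent among themselves
because each carries its own nonzero `±1` entry.
-/

open Matrix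

theorem notMem_span_of_forall_dotProduct_eq_zero {R n ι : Type*} [Field R] [LinearOrder R]
    [IsStrictOrderedRing R] [Fintype n] {v : n → R} {w : ι → n → R} (hv : v ≠ 0)
    (horth : ∀ i, v ⬝ᵥ w i = 0) : v ∉ Submodule.span R (Set.range w) := by
  intro hspan
  have hker : ∀ x ∈ Submodule.span R (Set.range w), v ⬝ᵥ x = 0 := by
    intro x hx
    induction hx using Submodule.span_induction with
    | mem x hx => obtain ⟨i, rfl⟩ := hx; exact horth i
    | zero => exact dotProduct_zero v
    | add x y _ _ hx hy => rw [dotProduct_add, hx, hy, add_zero]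
    | smul c x _ hx => rw [dotProduct_smul, hx, smul_zero]
  exact hv (dotProduct_self_eq_zero.mp (hker v hspan))

theorem linearIndependent_vecCons_of_forall_dotProduct_eq_zero {R n : Type*} [Field R]
    [LinearOrder R] [IsStrictOrderedRing R] [Fintype n] {k : ℕ} {v : n → R} {w : Fin k → n → R}
    (hv : v ≠ 0) (hw : LinearIndependent R w) (horth : ∀ i, v ⬝ᵥ w i = 0) :
    LinearIndependent R (vecCons v w) :=
  hw.finCons (notMem_span_of_forall_dotProduct_eq_zero hv horth)

theorem ne_zero_of_sum_sq_eq_sq {b : ℝ} (hb : 0 < b) {p : Fin 3 → ℝ}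
    (hsphere : p 0 ^ 2 + p 1 ^ 2 + p 2 ^ 2 = b ^ 2) : p ≠ 0 := by
  rintro rfl
  simp only [Pi.zero_apply] at hsphere
  nlinarith

theorem smul_dotProduct_azimuth_eq_zero {γ s c : ℝ} {p : Fin 3 → ℝ} (hs : s = 1 ∨ s = -1)
    (hact : p 1 = s * (γ * p 0)) : (c • p) ⬝ᵥ ![-γ, s, 0] = 0 := by
  have hss : s * s = 1 := by rcases hs with rfl | rfl <;> norm_num
  simp only [dotProduct, Fin.sum_univ_three, Pi.smul_apply, smul_eq_mul, cons_val_zero,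
    cons_val_one, cons_val, hact]
  linear_combination (c * γ * p 0) * hss

theorem smul_dotProduct_elevation_eq_zero {γ t c : ℝ} {p : Fin 3 → ℝ} (ht : t = 1 ∨ t = -1)
    (hact : p 2 = t * (γ * p 0)) : (c • p) ⬝ᵥ ![-γ, 0, t] = 0 := by
  have htt : t * t = 1 := by rcases ht with rfl | rfl <;> norm_num
  simp only [dotProduct, Fin.sum_univ_three, Pi.smul_apply, smul_eq_mul, cons_val_zero,
    cons_val_one, cons_val, hact]
  linear_combination (c * γ * p 0) * htt

theorem linearIndependent_azimuth_elevation {γa γe s t : ℝ} (hs : s ≠ 0) (ht : t ≠ 0) :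
    LinearIndependent ℝ ![![-γa, s, 0], ![-γe, 0, t]] := by
  refine LinearIndependent.pair_iff.mpr fun c d hcd => ?_
  have h1 : c * s = 0 := by simpa using congrFun hcd 1
  have h2 : d * t = 0 := by simpa using congrFun hcd 2
  exact ⟨(mul_eq_zero.mp h1).resolve_right hs, (mul_eq_zero.mp h2).resolve_right ht⟩

theorem stmt_5_general (γa γe b0 : ℝ) (hb : 0 < b0)
    (p : Fin 3 → ℝ)
    (hsphere : p 0 ^ 2 + p 1 ^ 2 + p 2 ^ 2 = b0 ^ 2) :
    -- no inequality constraint active: the sphere gradient alone is independent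
    (LinearIndependent ℝ ![(2 : ℝ) • p]) ∧
    -- exactly one azimuth constraint active (sign `s`)
    (∀ s : ℝ, (s = 1 ∨ s = -1) → p 1 = s * (γa * p 0) →
      LinearIndependent ℝ ![(2 : ℝ) • p, ![-γa, s, 0]]) ∧
    -- exactly one elevation constraint active (sign `t`)
    (∀ t : ℝ, (t = 1 ∨ t = -1) → p 2 = t * (γe * p 0) →
      LinearIndependent ℝ ![(2 : ℝ) • p, ![-γe, 0, t]]) ∧
    -- one azimuth and one elevation constraint active
    (∀ s t : ℝ, (s = 1 ∨ s = -1) → (t = 1 ∨ t = -1) →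
      p 1 = s * (γa * p 0) → p 2 = t * (γe * p 0) →
      LinearIndependent ℝ ![(2 : ℝ) • p, ![-γa, s, 0], ![-γe, 0, t]]) := by
  have hp : (2 : ℝ) • p ≠ 0 := smul_ne_zero two_ne_zero (ne_zero_of_sum_sq_eq_sq hb hsphere)
  have ne_zero_of_sign {s : ℝ} (hs : s = 1 ∨ s = -1) : s ≠ 0 := by
    rcases hs with rfl | rfl <;> norm_num
  refine ⟨?_, fun s hs hact => ?_, fun t ht hact => ?_, fun s t hs ht hacta hacte => ?_⟩
  · exact linearIndependent_vecCons_of_forall_dotProduct_eq_zero hp linearIndependent_empty_type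
      finZeroElim
  · refine linearIndependent_vecCons_of_forall_dotProduct_eq_zero hp
      (linearIndependent_unique_iff.mpr ?_) (Fin.forall_fin_one.mpr ?_)
    · exact fun h => ne_zero_of_sign hs (congrFun h 1)
    · exact smul_dotProduct_azimuth_eq_zero hs hact
  · refine linearIndependent_vecCons_of_forall_dotProduct_eq_zero hp
      (linearIndependent_unique_iff.mpr ?_) (Fin.forall_fin_one.mpr ?_)
    · exact fun h => ne_zero_of_sign ht (congrFun h 2)
    · exact smul_dotProduct_elevation_eq_zero ht hact
  · refine linearIndependent_vecCons_of_forall_dotProduct_eq_zero hp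
      (linearIndependent_azimuth_elevation (ne_zero_of_sign hs) (ne_zero_of_sign ht))
      (Fin.forall_fin_two.mpr ⟨?_, ?_⟩)
    · exact smul_dotProduct_azimuth_eq_zero hs hacta
    · exact smul_dotProduct_elevation_eq_zero ht hacte

/-- Every feasible point of problem 𝒫 is regular (LICQ): for each possible pattern of
active constraints (none, one azimuth, one elevation, or one azimuth plus one elevation,
the constraint `p₁ ≥ 0` never being active), the gradients of the active constraints
(including the sphere constraint, whose gradient is `2p`) are linearly independent. -/
theorem stmt_5 (γa γe b0 : ℝ) (hγa : 0 < γa) (hγe : 0 < γe) (hb : 0 < b0)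
    (p : Fin 3 → ℝ)
    (hsphere : p 0 ^ 2 + p 1 ^ 2 + p 2 ^ 2 = b0 ^ 2)
    (ha1 : -(p 0 * γa) ≤ p 1) (ha2 : p 1 ≤ p 0 * γa)
    (he1 : -(p 0 * γe) ≤ p 2) (he2 : p 2 ≤ p 0 * γe)
    (hx : 0 ≤ p 0) :
    -- no inequality constraint active: the sphere gradient alone is independent
    (LinearIndependent ℝ ![(2 : ℝ) • p]) ∧
    -- exactly one azimuth constraint active (sign `s`)
    (∀ s : ℝ, (s = 1 ∨ s = -1) → p 1 = s * (γa * p 0) →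
      LinearIndependent ℝ ![(2 : ℝ) • p, ![-γa, s, 0]]) ∧
    -- exactly one elevation constraint active (sign `t`)
    (∀ t : ℝ, (t = 1 ∨ t = -1) → p 2 = t * (γe * p 0) →
      LinearIndependent ℝ ![(2 : ℝ) • p, ![-γe, 0, t]]) ∧
    -- one azimuth and one elevation constraint active
    (∀ s t : ℝ, (s = 1 ∨ s = -1) → (t = 1 ∨ t = -1) →
      p 1 = s * (γa * p 0) → p 2 = t * (γe * p 0) →
      LinearIndependent ℝ ![(2 : ℝ) • p, ![-γa, s, 0], ![-γe, 0, t]]) :=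
  stmt_5_general γa γe b0 hb p hsphere
end

section
/- Let 0 ≤ λ₁ ≤ λ₂ ≤ λ₃, z̄ ∈ ℝ³ with z̄₃ ≠ 0, and f̄(λ) = Σⱼ z̄ⱼ²/(λ + λⱼ)² − 1. Then the unique root λ̄₃ of f̄ in (−∞, −λ₃) satisfies −λ₃ − ‖z̄‖ ≤ λ̄₃ ≤ −λ₃ − |z̄₃|. -/
/-!
At a root `x` of `∑ zᵢ² / (x + lᵢ)² = 1` every term is at most `1`, which gives
`|z₃| ≤ |x + l₃|`. If moreover `x < -l₃` with `l₃` the largest pole parameter, then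
`(x + l₃)² ≤ (x + lᵢ)²` for every `i`, so `1 ≤ ‖z‖² / (x + l₃)²`.
-/

namespace SecularEquation

variable {ι : Type*} (s : Finset ι) (z l : ι → ℝ) (x : ℝ)

theorem abs_le_abs_add_of_sum_eq_one
    (hsum : ∑ i ∈ s, z i ^ 2 / (x + l i) ^ 2 = 1) {j : ι} (hj : j ∈ s)
    (hpole : x + l j ≠ 0) :
    |z j| ≤ |x + l j| := by
  have hterm : z j ^ 2 / (x + l j) ^ 2 ≤ 1 :=
    hsum ▸ Finset.single_le_sum (f := fun i => z i ^ 2 / (x + l i) ^ 2)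
      (fun i _ => by positivity) hj
  exact sq_le_sq.mp ((div_le_one (by positivity)).mp hterm)

theorem sq_add_le_sum_sq_of_sum_eq_one
    (hsum : ∑ i ∈ s, z i ^ 2 / (x + l i) ^ 2 = 1) {m : ℝ} (hm : ∀ i ∈ s, l i ≤ m)
    (hx : x + m < 0) :
    (x + m) ^ 2 ≤ ∑ i ∈ s, z i ^ 2 := by
  have hpos : 0 < (x + m) ^ 2 := sq_pos_of_neg hx
  have hle : ∀ i ∈ s, z i ^ 2 / (x + l i) ^ 2 ≤ z i ^ 2 / (x + m) ^ 2 := fun i hi =>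
    div_le_div_of_nonneg_left (sq_nonneg _) hpos (by nlinarith [hm i hi])
  rw [← one_le_div hpos, Finset.sum_div, ← hsum]
  exact Finset.sum_le_sum hle

end SecularEquation

theorem stmt_13_general (l1 l2 l3 z1 z2 z3 : ℝ)
    (h12 : l1 ≤ l2) (h23 : l2 ≤ l3)
    (f : ℝ → ℝ)
    (hf : f = fun x => z1 ^ 2 / (x + l1) ^ 2 + z2 ^ 2 / (x + l2) ^ 2 +
      z3 ^ 2 / (x + l3) ^ 2 - 1)
    (r : ℝ) (hr1 : r < -l3) (hr2 : f r = 0) :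
    -l3 - Real.sqrt (z1 ^ 2 + z2 ^ 2 + z3 ^ 2) ≤ r ∧ r ≤ -l3 - |z3| := by
  set z : Fin 3 → ℝ := ![z1, z2, z3]
  set l : Fin 3 → ℝ := ![l1, l2, l3]
  have hsum : ∑ i, z i ^ 2 / (r + l i) ^ 2 = 1 := by
    simp only [hf] at hr2
    simp only [Fin.sum_univ_three, z, l, Matrix.cons_val]
    linarith
  have hl : ∀ i ∈ Finset.univ, l i ≤ l3 := by
    intro i _
    fin_cases i <;> simp [l] <;> linarith
  have hr : r + l3 < 0 := by linarith
  constructor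
  · have hnorm := SecularEquation.sq_add_le_sum_sq_of_sum_eq_one _ z l r hsum hl hr
    simp only [Fin.sum_univ_three, z, Matrix.cons_val] at hnorm
    have hsqrt := Real.abs_le_sqrt hnorm
    rw [abs_of_neg hr] at hsqrt
    linarith
  · have h3 :=
      SecularEquation.abs_le_abs_add_of_sum_eq_one _ z l r hsum (Finset.mem_univ 2) hr.ne
    simp only [z, l, Matrix.cons_val, abs_of_neg hr] at h3
    linarith

/-- The unique root of the secular function in `(−∞, −λ₃)` lies in
`[−λ₃ − ‖z̄‖, −λ₃ − |z̄₃|]`. -/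
theorem stmt_13 (l1 l2 l3 z1 z2 z3 : ℝ)
    (h0 : 0 ≤ l1) (h12 : l1 ≤ l2) (h23 : l2 ≤ l3) (hz3 : z3 ≠ 0)
    (f : ℝ → ℝ)
    (hf : f = fun x => z1 ^ 2 / (x + l1) ^ 2 + z2 ^ 2 / (x + l2) ^ 2 +
      z3 ^ 2 / (x + l3) ^ 2 - 1)
    (r : ℝ) (hr1 : r < -l3) (hr2 : f r = 0) :
    -l3 - Real.sqrt (z1 ^ 2 + z2 ^ 2 + z3 ^ 2) ≤ r ∧ r ≤ -l3 - |z3| :=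
  stmt_13_general l1 l2 l3 z1 z2 z3 h12 h23 f hf r hr1 hr2
end

section
/- Let 0 ≤ λ₁ ≤ λ₂ ≤ λ₃, z̄ ∈ ℝ³ with z̄₁ ≠ 0, and f̄(λ) = Σⱼ z̄ⱼ²/(λ + λⱼ)² − 1. Then the unique root of f̄ in (−λ₁, +∞) lies in the interval [−λ₁ + |z̄₁|, −λ₁ + ‖z̄‖]. -/
/-!
Put `a = r + λ₁ > 0`. Since every term of the secular equation
`∑ⱼ z̄ⱼ² / (r + λⱼ)² = 1` is nonnegative, the first one is at most `1`, i.e. `|z̄₁| ≤ a`.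
Since `λ₁` is the smallest shift, every term is at most `z̄ⱼ² / a²`, so `1 ≤ ‖z̄‖² / a²`,
i.e. `a ≤ ‖z̄‖`.
-/

open Finset

section SecularEquation

variable {ι : Type*} {s : Finset ι} {l z : ι → ℝ} {x : ℝ}

theorem abs_le_of_sum_sq_div_sq_eq_one {i : ι} (hi : i ∈ s) (hx : 0 < x + l i)
    (h : ∑ j ∈ s, z j ^ 2 / (x + l j) ^ 2 = 1) : |z i| ≤ x + l i := by
  have hterm : z i ^ 2 / (x + l i) ^ 2 ≤ 1 :=
    h ▸ single_le_sum (f := fun j => z j ^ 2 / (x + l j) ^ 2) (fun j _ => by positivity) hi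
  rw [div_le_one (by positivity)] at hterm
  exact abs_le_of_sq_le_sq hterm hx.le

theorem le_sqrt_sum_sq_of_sum_sq_div_sq_eq_one {i : ι} (hx : 0 < x + l i)
    (hmin : ∀ j ∈ s, l i ≤ l j) (h : ∑ j ∈ s, z j ^ 2 / (x + l j) ^ 2 = 1) :
    x + l i ≤ √(∑ j ∈ s, z j ^ 2) := by
  have hsum : 1 ≤ (∑ j ∈ s, z j ^ 2) / (x + l i) ^ 2 :=
    calc 1 = ∑ j ∈ s, z j ^ 2 / (x + l j) ^ 2 := h.symm
      _ ≤ ∑ j ∈ s, z j ^ 2 / (x + l i) ^ 2 := sum_le_sum fun j hj =>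
          div_le_div_of_nonneg_left (sq_nonneg _) (by positivity)
            (pow_le_pow_left₀ hx.le (by linarith [hmin j hj]) 2)
      _ = (∑ j ∈ s, z j ^ 2) / (x + l i) ^ 2 := (sum_div ..).symm
  rw [one_le_div (by positivity)] at hsum
  exact (Real.le_sqrt' hx).mpr hsum

end SecularEquation

theorem stmt_14_general (l1 l2 l3 z1 z2 z3 : ℝ)
    (h12 : l1 ≤ l2) (h23 : l2 ≤ l3)
    (f : ℝ → ℝ)
    (hf : f = fun x => z1 ^ 2 / (x + l1) ^ 2 + z2 ^ 2 / (x + l2) ^ 2 +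
      z3 ^ 2 / (x + l3) ^ 2 - 1)
    (r : ℝ) (hr1 : -l1 < r) (hr2 : f r = 0) :
    -l1 + |z1| ≤ r ∧ r ≤ -l1 + Real.sqrt (z1 ^ 2 + z2 ^ 2 + z3 ^ 2) := by
  set l : Fin 3 → ℝ := ![l1, l2, l3]
  set z : Fin 3 → ℝ := ![z1, z2, z3]
  have hpos : 0 < r + l 0 := by simp [l]; linarith
  have hmin : ∀ j ∈ univ, l 0 ≤ l j := by
    intro j _; fin_cases j <;> simp [l] <;> linarith
  have hsec : ∑ j, z j ^ 2 / (r + l j) ^ 2 = 1 := by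
    simp only [hf] at hr2
    simp [Fin.sum_univ_three, z, l]; linarith
  have hlow := abs_le_of_sum_sq_div_sq_eq_one (mem_univ 0) hpos hsec
  have hup := le_sqrt_sum_sq_of_sum_sq_div_sq_eq_one hpos hmin hsec
  simp [Fin.sum_univ_three, l, z] at hlow hup
  constructor <;> linarith

/-- The unique root of the secular function in `(−λ₁, +∞)` lies in
`[−λ₁ + |z̄₁|, −λ₁ + ‖z̄‖]`. -/
theorem stmt_14 (l1 l2 l3 z1 z2 z3 : ℝ)
    (h0 : 0 ≤ l1) (h12 : l1 ≤ l2) (h23 : l2 ≤ l3) (hz1 : z1 ≠ 0)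
    (f : ℝ → ℝ)
    (hf : f = fun x => z1 ^ 2 / (x + l1) ^ 2 + z2 ^ 2 / (x + l2) ^ 2 +
      z3 ^ 2 / (x + l3) ^ 2 - 1)
    (r : ℝ) (hr1 : -l1 < r) (hr2 : f r = 0) :
    -l1 + |z1| ≤ r ∧ r ≤ -l1 + Real.sqrt (z1 ^ 2 + z2 ^ 2 + z3 ^ 2) :=
  stmt_14_general l1 l2 l3 z1 z2 z3 h12 h23 f hf r hr1 hr2
end
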